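/- Under the noise model, the unique unpaired vertex of G is the global f-minimum v₀, and v₀ belongs to S. Consequently, for every δ ≥ ν, the spanning subgraph T_δ consisting of the negative edges with persistence at most δ contains all negative edges and is a spanning tree of G (so after δ-simplification there is exactly one critical vertex, which lies in the ω-neighborhood). -/

import Mathlib

open SimpleGraph

/-- The function value of an edge: the larger of the values of its two endpoints. -/
noncomputable def fbar {V : Type*} (f : V → ℝ) : Sym2 V → ℝ :=
  Sym2.lift ⟨fun u w => max (f u) (f w), fun u w => max_comm (f u) (f w)⟩

/-- The spanning subgraph `G_{≺e}` of `G` whose edges are exactly the edges `e'` of `G`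
with `e' ≺ e`. -/
def Gbelow {V : Type*} (G : SimpleGraph V) (lt : Sym2 V → Sym2 V → Prop) (e : Sym2 V) :
    SimpleGraph V :=
  SimpleGraph.fromEdgeSet {e' | e' ∈ G.edgeSet ∧ lt e' e}

/-- An edge `e` of `G` is negative if its two endpoints lie in different connected
components of `G_{≺e}`. -/
def IsNegEdge {V : Type*} (G : SimpleGraph V) (lt : Sym2 V → Sym2 V → Prop) (e : Sym2 V) :
    Prop :=
  e ∈ G.edgeSet ∧ ∃ u w : V, e = s(u, w) ∧ ¬ (Gbelow G lt e).Reachable u w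

/-- An edge `e` of `G` is positive if it is not negative. -/
def IsPosEdge {V : Type*} (G : SimpleGraph V) (lt : Sym2 V → Sym2 V → Prop) (e : Sym2 V) :
    Prop :=
  e ∈ G.edgeSet ∧ ¬ IsNegEdge G lt e

/-- The `f`-minimizing vertex of the connected component of `u` in the graph `H`. -/
noncomputable def compMin {V : Type*} [Fintype V] (f : V → ℝ) (H : SimpleGraph V) (u : V) :
    V := by
  classical
  exact Classical.choose (Finset.exists_min_image
    (Finset.univ.filter fun v => H.Reachable u v) f
    ⟨u, Finset.mem_filter.mpr ⟨Finset.mem_univ u, SimpleGraph.Reachable.refl u⟩⟩)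

/-- The vertex `m(e)` paired with a negative edge `e` by the elder rule: of the two
`f`-minimizing vertices of the components (in `G_{≺e}`) of the endpoints of `e`, the one
with the larger `f`-value. -/
noncomputable def pairVert {V : Type*} [Fintype V] (G : SimpleGraph V) (f : V → ℝ)
    (hf : Function.Injective f) (lt : Sym2 V → Sym2 V → Prop) (e : Sym2 V) : V :=
  Sym2.lift ⟨fun u w =>
      if f (compMin f (Gbelow G lt e) u) < f (compMin f (Gbelow G lt e) w)
      then compMin f (Gbelow G lt e) w
      else compMin f (Gbelow G lt e) u, by
    intro u w
    dsimp only
    rcases lt_trichotomy (f (compMin f (Gbelow G lt e) u)) (f (compMin f (Gbelow G lt e) w))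
      with h | h | h
    · rw [if_pos h, if_neg (lt_asymm h)]
    · rw [hf h]
    · rw [if_neg (lt_asymm h), if_pos h]⟩ e

/-- The persistence of a negative edge `e`: `f̄(e) - f(m(e))`. -/
noncomputable def persE {V : Type*} [Fintype V] (G : SimpleGraph V) (f : V → ℝ)
    (hf : Function.Injective f) (lt : Sym2 V → Sym2 V → Prop) (e : Sym2 V) : ℝ :=
  fbar f e - f (pairVert G f hf lt e)

/-!
Processing the edges in the order `≺` is Kruskal's algorithm: an edge is negative exactly when
it joins two different components of the edges before it, so the negative edges form a spanning
tree of the connected graph `G`. A vertex `v` above the global minimum is paired with the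
`≺`-first edge `e` after which the component of `v` contains a lower vertex: just before `e`,
`v` is the minimum of its component, and `e` merges that component with one of lower minimum.
Under the noise model `S` is the sublevel set `{f ≤ -β}`; since `G[S]` is connected, every edge
leaving `S` comes after all edges inside `S`, so the vertex it pairs lies outside `S` and its
persistence is at most `ν`, while an edge inside `S` has persistence at most `ν` trivially.
-/

namespace SimpleGraph

variable {V : Type*} {G K : SimpleGraph V}

lemma Reachable.of_forall_adj_reachable (h : ∀ ⦃a b⦄, G.Adj a b → K.Reachable a b) {u w : V}
    (huw : G.Reachable u w) : K.Reachable u w := by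
  rw [reachable_iff_reflTransGen] at huw
  exact Relation.reflTransGen_le_of_equivalence_of_le K.reachable_is_equivalence
    (fun _ _ hab => h hab) _ _ huw

lemma Reachable.of_sup_edge {a b u w : V} (h : (K ⊔ edge a b).Reachable u w) :
    K.Reachable u w ∨ K.Reachable u a ∧ K.Reachable b w ∨ K.Reachable u b ∧ K.Reachable a w := by
  obtain ⟨p⟩ := h
  induction p with
  | nil => exact Or.inl .rfl
  | cons huc _ ih =>
    rcases huc with huc | huc
    · have huc := huc.reachable
      rcases ih with h | ⟨h₁, h₂⟩ | ⟨h₁, h₂⟩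
      · exact Or.inl (huc.trans h)
      · exact Or.inr (Or.inl ⟨huc.trans h₁, h₂⟩)
      · exact Or.inr (Or.inr ⟨huc.trans h₁, h₂⟩)
    · obtain ⟨⟨rfl, rfl⟩ | ⟨rfl, rfl⟩, -⟩ := (edge_adj ..).mp huc
      · rcases ih with h | ⟨h₁, h₂⟩ | ⟨-, h₂⟩
        · exact Or.inr (Or.inl ⟨.rfl, h⟩)
        · exact Or.inr (Or.inl ⟨.rfl, h₂⟩)
        · exact Or.inl h₂
      · rcases ih with h | ⟨-, h₂⟩ | ⟨h₁, h₂⟩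
        · exact Or.inr (Or.inr ⟨.rfl, h⟩)
        · exact Or.inl h₂
        · exact Or.inr (Or.inr ⟨.rfl, h₂⟩)

end SimpleGraph

section

variable {V : Type*} {G : SimpleGraph V} {lt : Sym2 V → Sym2 V → Prop}

structure IsEdgeOrder (G : SimpleGraph V) (lt : Sym2 V → Sym2 V → Prop) : Prop where
  irrefl : ∀ e ∈ G.edgeSet, ¬ lt e e
  trans : ∀ e₁ ∈ G.edgeSet, ∀ e₂ ∈ G.edgeSet, ∀ e₃ ∈ G.edgeSet, lt e₁ e₂ → lt e₂ e₃ → lt e₁ e₃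
  total : ∀ e₁ ∈ G.edgeSet, ∀ e₂ ∈ G.edgeSet, e₁ ≠ e₂ → lt e₁ e₂ ∨ lt e₂ e₁

namespace IsEdgeOrder

lemma swap (ho : IsEdgeOrder G lt) : IsEdgeOrder G (flip lt) where
  irrefl e he := ho.irrefl e he
  trans e₁ h₁ e₂ h₂ e₃ h₃ h₁₂ h₂₃ := ho.trans e₃ h₃ e₂ h₂ e₁ h₁ h₂₃ h₁₂
  total e₁ h₁ e₂ h₂ hne := (ho.total e₁ h₁ e₂ h₂ hne).symm

variable [Finite V]

lemma wellFounded (ho : IsEdgeOrder G lt) : WellFounded fun e₁ e₂ : G.edgeSet => lt e₁ e₂ :=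
  haveI : IsTrans G.edgeSet fun e₁ e₂ => lt e₁ e₂ := ⟨fun a b c => ho.trans a a.2 b b.2 c c.2⟩
  haveI : Std.Irrefl fun e₁ e₂ : G.edgeSet => lt e₁ e₂ := ⟨fun a => ho.irrefl a a.2⟩
  Finite.wellFounded_of_trans_of_irrefl _

lemma exists_min (ho : IsEdgeOrder G lt) {s : Set (Sym2 V)} (hs : s ⊆ G.edgeSet)
    (hne : s.Nonempty) : ∃ m ∈ s, ∀ e ∈ s, e ≠ m → lt m e := by
  obtain ⟨e, he⟩ := hne
  obtain ⟨⟨m, hmG⟩, hms, hmin⟩ :=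
    ho.wellFounded.has_min {e : G.edgeSet | e.1 ∈ s} ⟨⟨e, hs he⟩, he⟩
  exact ⟨m, hms, fun e' he' hne' =>
    (ho.total e' (hs he') m hmG hne').resolve_left (hmin ⟨e', hs he'⟩ he')⟩

lemma exists_max (ho : IsEdgeOrder G lt) {s : Set (Sym2 V)} (hs : s ⊆ G.edgeSet)
    (hne : s.Nonempty) : ∃ m ∈ s, ∀ e ∈ s, e ≠ m → lt e m :=
  ho.swap.exists_min hs hne

end IsEdgeOrder

lemma gbelow_adj {e : Sym2 V} {a b : V} : (Gbelow G lt e).Adj a b ↔ G.Adj a b ∧ lt s(a, b) e := by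
  simp only [Gbelow, fromEdgeSet_adj, Set.mem_ofPred_eq, mem_edgeSet]
  exact ⟨fun h => h.1, fun h => ⟨h, h.1.ne⟩⟩

lemma gbelow_le (e : Sym2 V) : Gbelow G lt e ≤ G := fun _ _ h => (gbelow_adj.mp h).1

lemma mem_edgeSet_gbelow {e e' : Sym2 V} :
    e' ∈ (Gbelow G lt e).edgeSet ↔ e' ∈ G.edgeSet ∧ lt e' e := by
  induction e' using Sym2.ind with
  | _ a b => exact gbelow_adj

lemma isNegEdge_mk_iff {u w : V} :
    IsNegEdge G lt s(u, w) ↔ G.Adj u w ∧ ¬ (Gbelow G lt s(u, w)).Reachable u w := by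
  refine ⟨fun ⟨he, x, y, hxy, hr⟩ => ⟨he, ?_⟩, fun ⟨he, hr⟩ => ⟨he, u, w, rfl, hr⟩⟩
  rcases Sym2.eq_iff.mp hxy with ⟨rfl, rfl⟩ | ⟨rfl, rfl⟩
  · exact hr
  · exact fun h => hr h.symm

/-- The witness `m` is the `≺`-last edge of `H`. -/
lemma IsEdgeOrder.exists_reachable_gbelow_sup [Finite V] (ho : IsEdgeOrder G lt)
    {H : SimpleGraph V} (hH : H ≤ G) {u w : V} (h : H.Reachable u w) (hne : u ≠ w) :
    ∃ m ∈ H.edgeSet, (Gbelow G lt m ⊔ fromEdgeSet {m}).Reachable u w := by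
  have hHne : H.edgeSet.Nonempty := by
    rw [Set.nonempty_iff_ne_empty, Ne, edgeSet_eq_empty]
    rintro rfl
    exact hne (reachable_bot.mp h)
  obtain ⟨m, hmH, hmax⟩ := ho.exists_max (edgeSet_mono hH) hHne
  refine ⟨m, hmH, h.mono fun a b hab => ?_⟩
  by_cases ham : s(a, b) = m
  · exact Or.inr ((fromEdgeSet_adj _).mpr ⟨ham, hab.ne⟩)
  · exact Or.inl (gbelow_adj.mpr ⟨hH hab, hmax _ hab ham⟩)

section NegativeEdges

variable [Finite V]

lemma IsEdgeOrder.reachable_negEdges (ho : IsEdgeOrder G lt) {u w : V} (h : G.Adj u w) :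
    (fromEdgeSet {e | IsNegEdge G lt e}).Reachable u w := by
  suffices H : ∀ e : G.edgeSet, ∀ u w, e.1 = s(u, w) →
      (fromEdgeSet {e | IsNegEdge G lt e}).Reachable u w from H ⟨s(u, w), h⟩ u w rfl
  intro e
  induction e using ho.wellFounded.induction with
  | _ e ih =>
    obtain ⟨e, huw⟩ := e
    rintro u w rfl
    by_cases hneg : IsNegEdge G lt s(u, w)
    · exact ((fromEdgeSet_adj _).mpr ⟨hneg, G.ne_of_adj huw⟩).reachable
    · have hr : (Gbelow G lt s(u, w)).Reachable u w := by
        by_contra hr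
        exact hneg (isNegEdge_mk_iff.mpr ⟨huw, hr⟩)
      refine hr.of_forall_adj_reachable fun a b hab => ?_
      exact ih ⟨s(a, b), (gbelow_adj.mp hab).1⟩ (gbelow_adj.mp hab).2 a b rfl

/-- The `≺`-last edge of a cycle of negative edges would join two vertices that are already
joined by the earlier edges of the cycle. -/
lemma IsEdgeOrder.isAcyclic_negEdges (ho : IsEdgeOrder G lt) :
    (fromEdgeSet {e | IsNegEdge G lt e}).IsAcyclic := by
  intro u c hc
  have hcN : ∀ e ∈ c.edges, IsNegEdge G lt e := fun e he =>
    (edgeSet_fromEdgeSet _ ▸ c.edges_subset_edgeSet he).1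
  have hcne : {e | e ∈ c.edges}.Nonempty :=
    List.exists_mem_of_ne_nil _ (mt Walk.edges_eq_nil.mp hc.not_nil)
  obtain ⟨m, hmc, hmax⟩ := ho.exists_max (fun e he => (hcN e he).1) hcne
  let H := fromEdgeSet {e | e ∈ c.edges}
  have hcH : ∀ e ∈ c.edges, e ∈ H.edgeSet := fun e he => by
    rw [edgeSet_fromEdgeSet]
    exact ⟨he, not_isDiag_of_mem_edgeSet _ (c.edges_subset_edgeSet he)⟩
  induction m using Sym2.ind with
  | _ x y =>
    have hxy : (H.deleteEdges {s(x, y)}).Reachable x y :=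
      (adj_and_reachable_delete_edges_iff_exists_cycle.mpr
        ⟨u, c.transfer H hcH, hc.transfer hcH, by rwa [Walk.edges_transfer]⟩).2
    refine (isNegEdge_mk_iff.mp (hcN _ hmc)).2 (hxy.mono fun a b hab => ?_)
    obtain ⟨hab, hne⟩ := deleteEdges_adj.mp hab
    have habc : s(a, b) ∈ c.edges := ((fromEdgeSet_adj _).mp hab).1
    exact gbelow_adj.mpr ⟨(hcN _ habc).1, hmax _ habc hne⟩

lemma IsEdgeOrder.isTree_negEdges (ho : IsEdgeOrder G lt) (hG : G.Connected) :
    (fromEdgeSet {e | IsNegEdge G lt e}).IsTree :=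
  haveI := hG.nonempty
  ⟨⟨fun u w => (hG.preconnected u w).of_forall_adj_reachable fun _ _ => ho.reachable_negEdges⟩,
    ho.isAcyclic_negEdges⟩

end NegativeEdges

section ElderRule

variable [Fintype V] {f : V → ℝ}

lemma compMin_spec (f : V → ℝ) (H : SimpleGraph V) (u : V) :
    H.Reachable u (compMin f H u) ∧ ∀ v, H.Reachable u v → f (compMin f H u) ≤ f v := by
  classical
  unfold compMin
  generalize_proofs h
  obtain ⟨hmem, hmin⟩ := Classical.choose_spec h
  rw [Finset.mem_filter] at hmem
  exact ⟨hmem.2, fun v hv => hmin v (Finset.mem_filter.mpr ⟨Finset.mem_univ v, hv⟩)⟩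

lemma reachable_compMin (f : V → ℝ) (H : SimpleGraph V) (u : V) :
    H.Reachable u (compMin f H u) :=
  (compMin_spec f H u).1

lemma compMin_le (f : V → ℝ) (H : SimpleGraph V) {u v : V} (h : H.Reachable u v) :
    f (compMin f H u) ≤ f v :=
  (compMin_spec f H u).2 v h

lemma compMin_eq_of_forall_le (hf : Function.Injective f) {H : SimpleGraph V} {u v : V}
    (h : H.Reachable u v) (hmin : ∀ z, H.Reachable u z → f v ≤ f z) : compMin f H u = v :=
  hf ((compMin_le f H h).antisymm (hmin _ (reachable_compMin f H u)))

lemma f_pairVert_mk (hf : Function.Injective f) (u w : V) :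
    f (pairVert G f hf lt s(u, w)) =
      max (f (compMin f (Gbelow G lt s(u, w)) u)) (f (compMin f (Gbelow G lt s(u, w)) w)) := by
  rw [pairVert, Sym2.lift_mk]
  dsimp only
  split_ifs with h
  · exact (max_eq_right h.le).symm
  · exact (max_eq_left (not_lt.mp h)).symm

lemma exists_lt_pairVert (hf : Function.Injective f) {e : Sym2 V} (he : IsNegEdge G lt e) :
    ∃ x, f x < f (pairVert G f hf lt e) := by
  induction e using Sym2.ind with
  | _ u w =>
    set K := Gbelow G lt s(u, w)
    have hne : f (compMin f K u) ≠ f (compMin f K w) := fun h =>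
      (isNegEdge_mk_iff.mp he).2 <|
        (reachable_compMin f K u).trans (hf h ▸ (reachable_compMin f K w).symm)
    rw [f_pairVert_mk hf]
    rcases hne.lt_or_gt with h | h
    · exact ⟨_, h.trans_le (le_max_right _ _)⟩
    · exact ⟨_, h.trans_le (le_max_left _ _)⟩

lemma isNegEdge_and_pairVert_eq (hf : Function.Injective f) {e : Sym2 V} {a b v x : V}
    (he : e = s(a, b)) (heG : e ∈ G.edgeSet)
    (hmin : ∀ z, (Gbelow G lt e).Reachable v z → f v ≤ f z)
    (hva : (Gbelow G lt e).Reachable v a) (hbx : (Gbelow G lt e).Reachable b x)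
    (hx : f x < f v) :
    IsNegEdge G lt e ∧ pairVert G f hf lt e = v := by
  subst he
  set K := Gbelow G lt s(a, b)
  have hca : compMin f K a = v :=
    compMin_eq_of_forall_le hf hva.symm fun z hz => hmin z (hva.trans hz)
  have hcb : f (compMin f K b) < f v := (compMin_le f K hbx).trans_lt hx
  refine ⟨isNegEdge_mk_iff.mpr ⟨heG, fun hab => ?_⟩, hf ?_⟩
  · exact (hmin _ ((hva.trans hab).trans (reachable_compMin f K b))).not_gt hcb
  · rw [f_pairVert_mk hf, hca, max_eq_left hcb.le]

lemma IsEdgeOrder.exists_isNegEdge_pairVert_eq (ho : IsEdgeOrder G lt)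
    (hf : Function.Injective f) {v x : V} (hvx : G.Reachable v x) (hx : f x < f v) :
    ∃ e, IsNegEdge G lt e ∧ pairVert G f hf lt e = v := by
  obtain ⟨m, hmG, hm⟩ := ho.exists_reachable_gbelow_sup le_rfl hvx (fun h => (h ▸ hx).false)
  obtain ⟨e, ⟨heG, y, hy, hvy⟩, he_first⟩ := ho.exists_min
    (s := {e | e ∈ G.edgeSet ∧ ∃ x, f x < f v ∧ (Gbelow G lt e ⊔ fromEdgeSet {e}).Reachable v x})
    (fun e he => he.1) ⟨m, hmG, x, hx, hm⟩
  have hmin : ∀ z, (Gbelow G lt e).Reachable v z → f v ≤ f z := by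
    intro z hvz
    by_contra! hz
    obtain ⟨m', hm', hvm'⟩ :=
      ho.exists_reachable_gbelow_sup (gbelow_le e) hvz (fun h => (h ▸ hz).false)
    obtain ⟨hm'G, hm'e⟩ := mem_edgeSet_gbelow.mp hm'
    have hem' := he_first m' ⟨hm'G, z, hz, hvm'⟩ fun h => ho.irrefl e heG (h ▸ hm'e)
    exact ho.irrefl e heG (ho.trans e heG m' hm'G e heG hem' hm'e)
  induction e using Sym2.ind with
  | _ a b =>
    rcases Reachable.of_sup_edge (a := a) (b := b) hvy with h | ⟨hva, hby⟩ | ⟨hvb, hay⟩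
    · exact absurd (hmin y h) (not_le.mpr hy)
    · exact ⟨_, isNegEdge_and_pairVert_eq hf rfl heG hmin hva hby hy⟩
    · exact ⟨_, isNegEdge_and_pairVert_eq hf Sym2.eq_swap heG hmin hvb hay hy⟩

lemma lt_f_pairVert_of_preconnected (hf : Function.Injective f)
    (hlt_refine : ∀ e₁ ∈ G.edgeSet, ∀ e₂ ∈ G.edgeSet, fbar f e₁ < fbar f e₂ → lt e₁ e₂)
    {t : ℝ} (hS : (G.induce {v | f v ≤ t}).Preconnected) {e : Sym2 V} (he : IsNegEdge G lt e)
    (ht : t < fbar f e) : t < f (pairVert G f hf lt e) := by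
  induction e using Sym2.ind with
  | _ a b =>
    obtain ⟨hab, hnr⟩ := isNegEdge_mk_iff.mp he
    set K := Gbelow G lt s(a, b)
    by_contra! hle
    rw [f_pairVert_mk hf] at hle
    let φ : G.induce {v | f v ≤ t} →g K :=
      ⟨Subtype.val, fun {x y} hxy => gbelow_adj.mpr
        ⟨hxy, hlt_refine _ hxy _ hab ((max_le x.2 y.2).trans_lt ht)⟩⟩
    have hab' := (hS ⟨_, (le_max_left _ _).trans hle⟩ ⟨_, (le_max_right _ _).trans hle⟩).map φ
    exact hnr ((reachable_compMin f K a).trans (hab'.trans (reachable_compMin f K b).symm))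

end ElderRule

section NoiseModel

variable {f : V → ℝ} {S : Set V} {β ν : ℝ}

lemma mem_iff_le_of_noise (hνβ : ν < β) (hfS : ∀ v ∈ S, f v ∈ Set.Icc (-β - ν) (-β))
    (hfSc : ∀ v : V, v ∉ S → f v ∈ Set.Icc (-ν) 0) (v : V) : v ∈ S ↔ f v ≤ -β := by
  refine ⟨fun h => (hfS v h).2, fun h => by_contra fun h' => ?_⟩
  linarith [(hfSc v h').1]

lemma persE_le_of_noise [Fintype V] (hf : Function.Injective f)
    (hlt_refine : ∀ e₁ ∈ G.edgeSet, ∀ e₂ ∈ G.edgeSet, fbar f e₁ < fbar f e₂ → lt e₁ e₂)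
    (hν : 0 ≤ ν) (hνβ : ν < β) (hS : (G.induce S).Preconnected)
    (hfS : ∀ v ∈ S, f v ∈ Set.Icc (-β - ν) (-β)) (hfSc : ∀ v : V, v ∉ S → f v ∈ Set.Icc (-ν) 0)
    {e : Sym2 V} (he : IsNegEdge G lt e) : persE G f hf lt e ≤ ν := by
  have hbounds : ∀ v, -β - ν ≤ f v ∧ f v ≤ 0 := fun v => by
    by_cases hv : v ∈ S
    · exact ⟨(hfS v hv).1, by linarith [(hfS v hv).2]⟩
    · exact ⟨by linarith [(hfSc v hv).1], (hfSc v hv).2⟩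
  rw [persE]
  rcases le_or_gt (fbar f e) (-β) with hfe | hfe
  · linarith [(hbounds (pairVert G f hf lt e)).1]
  · have hS' : S = {v | f v ≤ -β} := Set.ext (mem_iff_le_of_noise hνβ hfS hfSc)
    have hpv := lt_f_pairVert_of_preconnected hf hlt_refine (hS' ▸ hS) he hfe
    have hpvS : pairVert G f hf lt e ∉ S := fun h => hpv.not_ge (hfS _ h).2
    have hfe0 : fbar f e ≤ 0 := by
      induction e using Sym2.ind with
      | _ a b => exact max_le (hbounds a).2 (hbounds b).2
    linarith [(hfSc _ hpvS).1]

end NoiseModel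

end

/-- Under the noise model, the unique unpaired vertex of `G` is the global
`f`-minimum `v₀`, which lies in `S`; consequently, for every `δ ≥ ν`, the spanning subgraph
`T_δ` of negative edges with persistence at most `δ` contains all negative edges and is a
spanning tree of `G`. -/
theorem unique_unpaired_vertex_and_spanning_tree {V : Type*} [Fintype V]
    (G : SimpleGraph V) (f : V → ℝ) (hf : Function.Injective f)
    (lt : Sym2 V → Sym2 V → Prop)
    (hlt_irrefl : ∀ e ∈ G.edgeSet, ¬ lt e e)
    (hlt_trans : ∀ e₁ ∈ G.edgeSet, ∀ e₂ ∈ G.edgeSet, ∀ e₃ ∈ G.edgeSet,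
      lt e₁ e₂ → lt e₂ e₃ → lt e₁ e₃)
    (hlt_total : ∀ e₁ ∈ G.edgeSet, ∀ e₂ ∈ G.edgeSet, e₁ ≠ e₂ → lt e₁ e₂ ∨ lt e₂ e₁)
    (hlt_refine : ∀ e₁ ∈ G.edgeSet, ∀ e₂ ∈ G.edgeSet, fbar f e₁ < fbar f e₂ → lt e₁ e₂)
    (S : Set V) (β ν : ℝ) (hβν : 2 * ν < β) (hν : 0 ≤ ν)
    (hG : G.Connected) (hS : (G.induce S).Connected)
    (hfS : ∀ v ∈ S, f v ∈ Set.Icc (-β - ν) (-β))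
    (hfSc : ∀ v : V, v ∉ S → f v ∈ Set.Icc (-ν) 0)
    (v₀ : V) (hv₀ : ∀ w : V, f v₀ ≤ f w) :
    v₀ ∈ S ∧
    (∀ v : V,
      (¬ ∃ e : Sym2 V, IsNegEdge G lt e ∧ pairVert G f hf lt e = v) ↔ v = v₀) ∧
    (∀ δ : ℝ, ν ≤ δ →
      (∀ e : Sym2 V, IsNegEdge G lt e → persE G f hf lt e ≤ δ) ∧
      (SimpleGraph.fromEdgeSet
        {e | IsNegEdge G lt e ∧ persE G f hf lt e ≤ δ}).IsTree) := by
  have hνβ : ν < β := by linarith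
  have ho : IsEdgeOrder G lt := ⟨hlt_irrefl, hlt_trans, hlt_total⟩
  have hpers : ∀ e, IsNegEdge G lt e → persE G f hf lt e ≤ ν := fun e =>
    persE_le_of_noise hf hlt_refine hν hνβ hS.preconnected hfS hfSc
  obtain ⟨⟨s, hs⟩⟩ := hS.nonempty
  refine ⟨(mem_iff_le_of_noise hνβ hfS hfSc v₀).mpr ((hv₀ s).trans (hfS s hs).2),
    fun v => ⟨fun hv => ?_, ?_⟩, fun δ hδ => ⟨fun e he => (hpers e he).trans hδ, ?_⟩⟩
  · by_contra hne
    exact hv (ho.exists_isNegEdge_pairVert_eq hf (hG.preconnected v v₀)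
      ((hv₀ v).lt_of_ne fun h => hne (hf h).symm))
  · rintro rfl ⟨e, he, rfl⟩
    obtain ⟨x, hx⟩ := exists_lt_pairVert hf he
    exact (hv₀ x).not_gt hx
  · have hT : {e | IsNegEdge G lt e ∧ persE G f hf lt e ≤ δ} = {e | IsNegEdge G lt e} :=
      Set.ext fun e => ⟨And.left, fun he => ⟨he, (hpers e he).trans hδ⟩⟩
    rw [hT]
    exact ho.isTree_negEdges hG
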